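/- arXiv:2210.01598 — 4 statements merged into one kernel-verified Lean document; each statement's English description precedes it below -/
import Mathlib

section
/- Let D be an oriented graph and let v ∈ V(D) be a transitive vertex, i.e., for all u,w ∈ V(D), if (u,v) ∈ A(D) and (v,w) ∈ A(D) then (u,w) ∈ A(D). Then v belongs to every interval set and to every hull set of D in the geodetic convexity and in the P3* convexity. -/
/-! Basic machinery for convexity on oriented graphs. -/

/-- A directed walk along the arc relation `A` from `u` to `v`,
recorded as the (nonempty) list of its vertices. Its length is `l.length - 1`. -/
def DiWalk {V : Type*} (A : V → V → Prop) (u v : V) (l : List V) : Prop :=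
  l.head? = some u ∧ l.getLast? = some v ∧ l.Chain' A

/-- A shortest directed walk (geodesic) from `u` to `v`:
a directed walk of minimum length among all directed `(u,v)`-walks. -/
def IsGeodesic {V : Type*} (A : V → V → Prop) (u v : V) (l : List V) : Prop :=
  DiWalk A u v l ∧ ∀ l', DiWalk A u v l' → l.length ≤ l'.length

/-- Geodetic interval: `u`, `v`, and all vertices lying on a shortest directed
`(u,v)`-path or on a shortest directed `(v,u)`-path. -/
def geoInterval {V : Type*} (A : V → V → Prop) (u v : V) : Set V :=
  {u, v} ∪ {w | (∃ l, IsGeodesic A u v l ∧ w ∈ l) ∨ (∃ l, IsGeodesic A v u l ∧ w ∈ l)}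

/-- P3 interval: `u`, `v`, and all vertices lying on a directed `(u,v)`- or
`(v,u)`-path of length two. -/
def p3Interval {V : Type*} (A : V → V → Prop) (u v : V) : Set V :=
  {u, v} ∪ {w | (A u w ∧ A w v) ∨ (A v w ∧ A w u)}

/-- P3* interval: `u`, `v`, and all vertices lying on a shortest directed `(u,v)`- or
`(v,u)`-path of length two (i.e. the corresponding endpoints are not adjacent). -/
def p3sInterval {V : Type*} (A : V → V → Prop) (u v : V) : Set V :=
  {u, v} ∪ {w | (A u w ∧ A w v ∧ ¬ A u v) ∨ (A v w ∧ A w u ∧ ¬ A v u)}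

/-- A set is convex for the interval function `I` if it is closed under `I`. -/
def IsConvexSet {V : Type*} (I : V → V → Set V) (C : Set V) : Prop :=
  ∀ u ∈ C, ∀ v ∈ C, I u v ⊆ C

/-- The convex hull of `S`: the smallest convex set containing `S`. -/
def convexHullD {V : Type*} (I : V → V → Set V) (S : Set V) : Set V :=
  ⋂₀ {C | IsConvexSet I C ∧ S ⊆ C}

/-- `S` is an interval set if applying `I` to pairs of `S` covers all vertices. -/
def IsIntervalSet {V : Type*} (I : V → V → Set V) (S : Set V) : Prop :=
  (⋃ u ∈ S, ⋃ v ∈ S, I u v) = Set.univ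

/-- `S` is a hull set if its convex hull is the whole vertex set. -/
def IsHullSet {V : Type*} (I : V → V → Set V) (S : Set V) : Prop :=
  convexHullD I S = Set.univ

/-- The interval number: minimum cardinality of an interval set. -/
noncomputable def intervalNumber {V : Type*} (I : V → V → Set V) : ℕ :=
  sInf {k | ∃ S : Set V, IsIntervalSet I S ∧ S.ncard = k}

/-- The hull number: minimum cardinality of a hull set. -/
noncomputable def hullNumber {V : Type*} (I : V → V → Set V) : ℕ :=
  sInf {k | ∃ S : Set V, IsHullSet I S ∧ S.ncard = k}

/-- `v` is reachable from `u` by a directed walk. -/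
def Reach {V : Type*} (A : V → V → Prop) (u v : V) : Prop :=
  ∃ l, DiWalk A u v l

/-- An oriented graph: no loops and at most one arc between any two vertices. -/
def IsOriented {V : Type*} (A : V → V → Prop) : Prop :=
  ∀ u v, A u v → ¬ A v u

/-- Strong connectivity. -/
def StronglyConnected {V : Type*} (A : V → V → Prop) : Prop :=
  ∀ u v, Reach A u v

/-- Connectivity of the underlying undirected graph. -/
def ConnectedD {V : Type*} (A : V → V → Prop) : Prop :=
  ∀ u v : V, Reach (fun a b => A a b ∨ A b a) u v

/-- A strong component: an equivalence class of mutual reachability. -/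
def IsStrongComponent {V : Type*} (A : V → V → Prop) (C : Set V) : Prop :=
  ∃ v, C = {u | Reach A u v ∧ Reach A v u}

/-- A sink strong component: a strong component with no arc leaving it. -/
def IsSinkComponent {V : Type*} (A : V → V → Prop) (C : Set V) : Prop :=
  IsStrongComponent A C ∧ ∀ u ∈ C, ∀ w, w ∉ C → ¬ A u w

/-- A source strong component: a strong component with no arc entering it. -/
def IsSourceComponent {V : Type*} (A : V → V → Prop) (C : Set V) : Prop :=
  IsStrongComponent A C ∧ ∀ u ∈ C, ∀ w, w ∉ C → ¬ A w u

/-- The out-section of `u`: all vertices reachable from `u`. -/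
def outSection {V : Type*} (A : V → V → Prop) (u : V) : Set V :=
  {w | Reach A u w}

/-- The in-section of `u`: all vertices from which `u` is reachable. -/
def inSection {V : Type*} (A : V → V → Prop) (u : V) : Set V :=
  {w | Reach A w u}

/-- A tournament: an oriented graph where every two distinct vertices are adjacent. -/
def IsTournament {V : Type*} (A : V → V → Prop) : Prop :=
  (∀ u v, A u v → ¬ A v u) ∧ ∀ u v : V, u ≠ v → A u v ∨ A v u

/-- The number of arcs of the digraph given by `A`. -/
noncomputable def arcCount {V : Type*} (A : V → V → Prop) : ℕ :=
  Nat.card {p : V × V // A p.1 p.2}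

/-! A transitive vertex `v` lies in no interval `I(u, w)` with `u, w ≠ v`. In the P3* convexity
this is immediate: a path `u → v → w` forces the arc `u → w`. In the geodetic convexity, an
occurrence `a → v → b` inside a walk can be short-cut by the arc `a → b`, so no shortest walk
passes through `v` except at its ends. Consequently `V ∖ {v}` is convex, and no set avoiding `v`
can be an interval set or a hull set. -/

theorem List.exists_eq_append_cons_cons_cons_of_mem {α : Type*} {l : List α} {x : α}
    (hx : x ∈ l) (hhead : l.head? ≠ some x) (hlast : l.getLast? ≠ some x) :
    ∃ s a b t, l = s ++ a :: x :: b :: t := by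
  obtain ⟨s, t, rfl⟩ := List.append_of_mem hx
  rcases List.eq_nil_or_concat s with rfl | ⟨s, a, rfl⟩
  · simp at hhead
  rcases t with _ | ⟨b, t⟩
  · simp at hlast
  exact ⟨s, a, b, t, by simp⟩

theorem List.IsChain.shortcut {α : Type*} {R : α → α → Prop} {s t : List α} {a x b : α}
    (h : (s ++ a :: x :: b :: t).IsChain R) (hab : R a b) : (s ++ a :: b :: t).IsChain R := by
  simp only [List.isChain_append, List.isChain_cons_cons] at h ⊢
  exact ⟨h.1, ⟨hab, h.2.1.2.2⟩, h.2.2⟩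

section TransitiveVertex

variable {V : Type*} {A : V → V → Prop} {v u w : V}

theorem not_mem_of_isGeodesic_of_transitive (hv : ∀ u w, A u v → A v w → A u w)
    (hu : u ≠ v) (hw : w ≠ v) {l : List V} (hl : IsGeodesic A u w l) : v ∉ l := by
  obtain ⟨⟨hhead, hlast, hchain⟩, hmin⟩ := hl
  intro hmem
  obtain ⟨s, a, b, t, rfl⟩ := List.exists_eq_append_cons_cons_cons_of_mem hmem
    (by rw [hhead]; simpa using hu) (by rw [hlast]; simpa using hw)
  have hchain' : (s ++ a :: v :: b :: t).IsChain A := hchain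
  have hab : A a b := by
    simp only [List.isChain_append, List.isChain_cons_cons] at hchain'
    exact hv a b hchain'.2.1.1 hchain'.2.1.2.1
  have hshort : DiWalk A u w (s ++ a :: b :: t) :=
    ⟨by simpa using hhead, by simpa using hlast, hchain'.shortcut hab⟩
  simpa using hmin _ hshort

theorem not_mem_geoInterval_of_transitive (hv : ∀ u w, A u v → A v w → A u w)
    (hu : u ≠ v) (hw : w ≠ v) : v ∉ geoInterval A u w := by
  rintro ((rfl | rfl) | ⟨l, hl, hmem⟩ | ⟨l, hl, hmem⟩)
  · exact hu rfl
  · exact hw rfl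
  · exact not_mem_of_isGeodesic_of_transitive hv hu hw hl hmem
  · exact not_mem_of_isGeodesic_of_transitive hv hw hu hl hmem

theorem not_mem_p3sInterval_of_transitive (hv : ∀ u w, A u v → A v w → A u w)
    (hu : u ≠ v) (hw : w ≠ v) : v ∉ p3sInterval A u w := by
  rintro ((rfl | rfl) | ⟨huv, hvw, hnuw⟩ | ⟨hwv, hvu, hnwu⟩)
  · exact hu rfl
  · exact hw rfl
  · exact hnuw (hv u w huv hvw)
  · exact hnwu (hv w u hwv hvu)

end TransitiveVertex

section AvoidedVertex

variable {V : Type*} {I : V → V → Set V} {v : V} {S : Set V}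

theorem mem_of_isIntervalSet (hI : ∀ u w, u ≠ v → w ≠ v → v ∉ I u w)
    (hS : IsIntervalSet I S) : v ∈ S := by
  have hv : v ∈ ⋃ u ∈ S, ⋃ w ∈ S, I u w := hS ▸ Set.mem_univ v
  simp only [Set.mem_iUnion] at hv
  obtain ⟨u, hu, w, hw, hvuw⟩ := hv
  by_contra hvS
  exact hI u w (fun h => hvS (h ▸ hu)) (fun h => hvS (h ▸ hw)) hvuw

theorem isConvexSet_compl_singleton (hI : ∀ u w, u ≠ v → w ≠ v → v ∉ I u w) :
    IsConvexSet I {v}ᶜ := by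
  rintro u hu w hw x hx rfl
  exact hI u w hu hw hx

theorem mem_of_isHullSet (hI : ∀ u w, u ≠ v → w ≠ v → v ∉ I u w)
    (hS : IsHullSet I S) : v ∈ S := by
  by_contra hvS
  have hsub : convexHullD I S ⊆ {v}ᶜ :=
    Set.sInter_subset_of_mem ⟨isConvexSet_compl_singleton hI, Set.subset_compl_singleton_iff.mpr hvS⟩
  exact hsub (hS ▸ Set.mem_univ v) rfl

end AvoidedVertex

theorem stmt_2_general {V : Type*} (A : V → V → Prop)
    (v : V) (hv : ∀ u w, A u v → A v w → A u w)
    (I : V → V → Set V)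
    (hI : I = geoInterval A ∨ I = p3sInterval A) :
    ∀ S : Set V, (IsIntervalSet I S → v ∈ S) ∧ (IsHullSet I S → v ∈ S) := by
  have hvI : ∀ u w, u ≠ v → w ≠ v → v ∉ I u w := by
    rcases hI with rfl | rfl
    exacts [fun _ _ => not_mem_geoInterval_of_transitive hv,
      fun _ _ => not_mem_p3sInterval_of_transitive hv]
  exact fun S => ⟨mem_of_isIntervalSet hvI, mem_of_isHullSet hvI⟩

/-- A transitive vertex of an oriented graph belongs to every
interval set and every hull set in the geodetic and P3* convexities. -/
theorem stmt_2 {V : Type*} [Finite V] (A : V → V → Prop) (hA : IsOriented A)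
    (v : V) (hv : ∀ u w, A u v → A v w → A u w)
    (I : V → V → Set V)
    (hI : I = geoInterval A ∨ I = p3sInterval A) :
    ∀ S : Set V, (IsIntervalSet I S → v ∈ S) ∧ (IsHullSet I S → v ∈ S) :=
  stmt_2_general A v hv I hI
end

section
/- Let D be an oriented graph and let D' be a source strong component or a sink strong component of D. Then every interval X-set and every hull X-set of D contains at least one vertex of D', for each X among the geodetic, P3, and P3* convexities. -/
/-! The geodetic, P3 and P3* intervals between `u` and `v` all lie in the all-path interval:
the vertices on some directed walk between `u` and `v`. No arc enters a source component `C`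
(leaves a sink component `C`), so a walk starting (ending) outside `C` stays outside `C`;
hence `Cᶜ` is convex, and a set missing `C` has its intervals and its hull inside the proper
subset `Cᶜ`. -/

/-- The interval function of the all-path convexity. -/
def walkInterval {V : Type*} (A : V → V → Prop) (u v : V) : Set V :=
  {u, v} ∪ {w | ∃ l, (DiWalk A u v l ∨ DiWalk A v u l) ∧ w ∈ l}

section
variable {V : Type*} {A : V → V → Prop} {u v : V} {l : List V}

theorem DiWalk.forall_mem_of_head {p : V → Prop} (hl : DiWalk A u v l)
    (carries : ∀ ⦃x y⦄, A x y → p x → p y) (hu : p u) : ∀ w ∈ l, p w :=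
  hl.2.2.induction p l carries fun hne => (List.head_eq_iff_head?_eq_some hne).mpr hl.1 ▸ hu

theorem DiWalk.forall_mem_of_getLast {p : V → Prop} (hl : DiWalk A u v l)
    (carries : ∀ ⦃x y⦄, A x y → p y → p x) (hv : p v) : ∀ w ∈ l, p w :=
  hl.2.2.backwards_induction p l carries fun _ => List.getLast_of_mem_getLast? hl.2.1 ▸ hv

theorem geoInterval_subset_walkInterval : geoInterval A u v ⊆ walkInterval A u v := by
  rintro w (hw | ⟨l, hl, hw⟩ | ⟨l, hl, hw⟩)
  · exact Or.inl hw
  · exact Or.inr ⟨l, Or.inl hl.1, hw⟩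
  · exact Or.inr ⟨l, Or.inr hl.1, hw⟩

theorem p3Interval_subset_walkInterval : p3Interval A u v ⊆ walkInterval A u v := by
  rintro w (hw | ⟨huw, hwv⟩ | ⟨hvw, hwu⟩)
  · exact Or.inl hw
  · refine Or.inr ⟨[u, w, v], Or.inl ⟨rfl, rfl, ?_⟩, by simp⟩
    exact .cons_cons huw (.cons_cons hwv (.singleton v))
  · refine Or.inr ⟨[v, w, u], Or.inr ⟨rfl, rfl, ?_⟩, by simp⟩
    exact .cons_cons hvw (.cons_cons hwu (.singleton u))

theorem p3sInterval_subset_p3Interval : p3sInterval A u v ⊆ p3Interval A u v := by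
  rintro w (hw | ⟨huw, hwv, -⟩ | ⟨hvw, hwu, -⟩)
  exacts [Or.inl hw, Or.inr (Or.inl ⟨huw, hwv⟩), Or.inr (Or.inr ⟨hvw, hwu⟩)]

theorem IsConvexSet.mono {I J : V → V → Set V} (hIJ : ∀ u v, I u v ⊆ J u v) {K : Set V}
    (hK : IsConvexSet J K) : IsConvexSet I K :=
  fun u hu v hv => (hIJ u v).trans (hK u hu v hv)

theorem IsIntervalSet.eq_univ_of_subset {I : V → V → Set V} {S K : Set V}
    (hS : IsIntervalSet I S) (hK : IsConvexSet I K) (hSK : S ⊆ K) : K = Set.univ := by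
  refine Set.eq_univ_of_forall fun x => ?_
  have hx : x ∈ ⋃ u ∈ S, ⋃ v ∈ S, I u v := hS ▸ Set.mem_univ x
  obtain ⟨u, hu, v, hv, hx⟩ : ∃ u ∈ S, ∃ v ∈ S, x ∈ I u v := by simpa using hx
  exact hK u (hSK hu) v (hSK hv) hx

theorem IsHullSet.eq_univ_of_subset {I : V → V → Set V} {S K : Set V}
    (hS : IsHullSet I S) (hK : IsConvexSet I K) (hSK : S ⊆ K) : K = Set.univ :=
  Set.univ_subset_iff.mp (hS ▸ Set.sInter_subset_of_mem ⟨hK, hSK⟩)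

theorem IsStrongComponent.nonempty {C : Set V} (hC : IsStrongComponent A C) : C.Nonempty := by
  obtain ⟨c, rfl⟩ := hC
  have hcc : Reach A c c := ⟨[c], rfl, rfl, List.isChain_singleton c⟩
  exact ⟨c, hcc, hcc⟩

theorem IsSourceComponent.forall_mem_not_mem {C : Set V} (hC : IsSourceComponent A C)
    (hl : DiWalk A u v l) (hu : u ∉ C) : ∀ w ∈ l, w ∉ C :=
  hl.forall_mem_of_head (fun x y hxy hx hy => hC.2 y hy x hx hxy) hu

theorem IsSinkComponent.forall_mem_not_mem {C : Set V} (hC : IsSinkComponent A C)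
    (hl : DiWalk A u v l) (hv : v ∉ C) : ∀ w ∈ l, w ∉ C :=
  hl.forall_mem_of_getLast (fun x y hxy hy hx => hC.2 x hx y hy hxy) hv

theorem isConvexSet_walkInterval_compl {C : Set V}
    (hC : IsSourceComponent A C ∨ IsSinkComponent A C) :
    IsConvexSet (walkInterval A) Cᶜ := by
  rintro u hu v hv w ((rfl | rfl) | ⟨l, huv | hvu, hw⟩)
  · exact hu
  · exact hv
  · exact hC.elim (·.forall_mem_not_mem huv hu w hw) (·.forall_mem_not_mem huv hv w hw)
  · exact hC.elim (·.forall_mem_not_mem hvu hv w hw) (·.forall_mem_not_mem hvu hu w hw)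

end

theorem stmt_4_general {V : Type*} (A : V → V → Prop)
    (C : Set V) (hC : IsSourceComponent A C ∨ IsSinkComponent A C)
    (I : V → V → Set V)
    (hI : I = geoInterval A ∨ I = p3Interval A ∨ I = p3sInterval A) :
    ∀ S : Set V,
      (IsIntervalSet I S → ∃ x ∈ S, x ∈ C) ∧
      (IsHullSet I S → ∃ x ∈ S, x ∈ C) := by
  have hsub : ∀ u v, I u v ⊆ walkInterval A u v := by
    rcases hI with rfl | rfl | rfl
    exacts [fun _ _ => geoInterval_subset_walkInterval,
      fun _ _ => p3Interval_subset_walkInterval,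
      fun _ _ => p3sInterval_subset_p3Interval.trans p3Interval_subset_walkInterval]
  have hconv : IsConvexSet I Cᶜ := (isConvexSet_walkInterval_compl hC).mono hsub
  obtain ⟨c, hc⟩ : C.Nonempty := hC.elim (·.1.nonempty) (·.1.nonempty)
  have hproper : Cᶜ ≠ Set.univ := fun h => (h ▸ Set.mem_univ c : c ∈ Cᶜ) hc
  intro S
  constructor <;> intro hS <;> by_contra! hSC
  · exact hproper (hS.eq_univ_of_subset hconv hSC)
  · exact hproper (hS.eq_univ_of_subset hconv hSC)

/-- If `C` is a source or a sink strong component of an oriented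
graph `D`, then every interval set and every hull set of `D` in the geodetic,
P3 and P3* convexities contains a vertex of `C`. -/
theorem stmt_4 {V : Type*} [Finite V] (A : V → V → Prop) (hA : IsOriented A)
    (C : Set V) (hC : IsSourceComponent A C ∨ IsSinkComponent A C)
    (I : V → V → Set V)
    (hI : I = geoInterval A ∨ I = p3Interval A ∨ I = p3sInterval A) :
    ∀ S : Set V,
      (IsIntervalSet I S → ∃ x ∈ S, x ∈ C) ∧
      (IsHullSet I S → ∃ x ∈ S, x ∈ C) :=
  stmt_4_general A C hC I hI
end

section
/- If D is a strongly connected oriented graph with at least two vertices, then the hull number of D in the geodetic convexity satisfies hn_g(D) ≤ m(D) − n(D) + 2, where n(D) is the number of vertices and m(D) is the number of arcs of D. -/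
/-!
Fix a root `r` and a shortest-path in-tree towards it: every `v ≠ r` gets a parent `par v`
with `A v (par v)` one step closer to `r`. Following parents from any vertex is a geodesic to
`r`, and every vertex lies on such a path starting at a leaf (a vertex that is nobody's
parent), so the root together with the leaves is a hull set. The `n - 1` tree arcs end at
parents, while every non-root leaf has an entering arc, which is therefore not a tree arc;
hence `m ≥ n - 1 + #(leaves \ {r})`.
-/

section

variable {V : Type*} {A : V → V → Prop} {u v w : V} {l : List V}

namespace DiWalk

lemma ne_nil (h : DiWalk A u v l) : l ≠ [] := by
  rintro rfl
  simp [DiWalk] at h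

lemma singleton (v : V) : DiWalk A v v [v] :=
  ⟨rfl, rfl, List.isChain_singleton v⟩

lemma eq_of_singleton (h : DiWalk A u v [w]) : u = v := by
  obtain ⟨hu, hv, -⟩ := h
  simp only [List.head?_cons, List.getLast?_singleton, Option.some.injEq] at hu hv
  exact hu.symm.trans hv

lemma cons (ha : A u w) (h : DiWalk A w v l) : DiWalk A u v (u :: l) := by
  obtain ⟨hw, hv, hc⟩ := h
  obtain ⟨t, rfl⟩ : ∃ t, l = w :: t := by
    cases l with
    | nil => simp at hw
    | cons x t => simp only [List.head?_cons, Option.some.injEq] at hw; exact ⟨t, hw ▸ rfl⟩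
  exact ⟨rfl, by rwa [List.getLast?_cons_cons], hc.cons_cons ha⟩

lemma of_cons_cons {x y : V} (h : DiWalk A u v (x :: y :: l)) :
    x = u ∧ A u y ∧ DiWalk A y v (y :: l) := by
  obtain ⟨hu, hv, hc⟩ := h
  simp only [List.head?_cons, Option.some.injEq] at hu
  subst hu
  rw [List.getLast?_cons_cons] at hv
  exact ⟨rfl, (List.isChain_cons_cons.mp hc).1, rfl, hv, hc.tail⟩

lemma reflTransGen (h : DiWalk A u v l) : Relation.ReflTransGen A u v := by
  obtain ⟨hu, hv, hc⟩ := h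
  cases l with
  | nil => simp at hu
  | cons x t =>
    simp only [List.head?_cons, Option.some.injEq] at hu
    subst hu
    exact List.relationReflTransGen_of_exists_isChain_cons t hc
      (List.getLast_of_mem_getLast? hv)

end DiWalk

lemma exists_arc_to_of_reach (h : Reach A u v) (huv : u ≠ v) : ∃ a, A a v := by
  obtain ⟨l, hl⟩ := h
  rcases hl.reflTransGen.cases_tail with rfl | ⟨a, -, ha⟩
  · exact absurd rfl huv
  · exact ⟨a, ha⟩

/-- The number of arcs of a shortest directed walk from `u` to `v` (`0` if there is none). -/
noncomputable def walkDist (A : V → V → Prop) (u v : V) : ℕ :=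
  sInf {k | ∃ l, DiWalk A u v l ∧ l.length = k + 1}

lemma walkDist_add_one_le (h : DiWalk A u v l) : walkDist A u v + 1 ≤ l.length := by
  have hl : l.length = l.length - 1 + 1 := by
    have := List.length_pos_iff.mpr h.ne_nil
    omega
  have : walkDist A u v ≤ l.length - 1 := Nat.sInf_le ⟨l, h, hl⟩
  omega

lemma Reach.exists_length_walkDist (h : Reach A u v) :
    ∃ l, DiWalk A u v l ∧ l.length = walkDist A u v + 1 := by
  obtain ⟨l, hl⟩ := h
  refine Nat.sInf_mem (s := {k | ∃ l, DiWalk A u v l ∧ l.length = k + 1})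
    ⟨l.length - 1, l, hl, ?_⟩
  have := List.length_pos_iff.mpr hl.ne_nil
  omega

lemma walkDist_self (v : V) : walkDist A v v = 0 := by
  simpa using walkDist_add_one_le (DiWalk.singleton (A := A) v)

lemma Reach.eq_of_walkDist_eq_zero (h : Reach A u v) (h0 : walkDist A u v = 0) : u = v := by
  obtain ⟨l, hl, hlen⟩ := h.exists_length_walkDist
  rw [h0, List.length_eq_one_iff] at hlen
  obtain ⟨x, rfl⟩ := hlen
  exact hl.eq_of_singleton

lemma IsGeodesic.of_length (h : DiWalk A u v l) (hlen : l.length = walkDist A u v + 1) :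
    IsGeodesic A u v l :=
  ⟨h, fun _ h' => hlen ▸ walkDist_add_one_le h'⟩

lemma Reach.exists_arc_walkDist (h : Reach A u v) (huv : u ≠ v) :
    ∃ p, A u p ∧ walkDist A p v + 1 = walkDist A u v := by
  obtain ⟨l, hl, hlen⟩ := h.exists_length_walkDist
  match l, hl, hlen with
  | [_], hl, _ => exact absurd hl.eq_of_singleton huv
  | x :: y :: t, hl, hlen =>
    obtain ⟨-, hay, hy⟩ := hl.of_cons_cons
    refine ⟨y, hay, le_antisymm ?_ ?_⟩
    · have := walkDist_add_one_le hy
      simp only [List.length_cons] at this hlen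
      omega
    · obtain ⟨l', hl', hlen'⟩ := Reach.exists_length_walkDist ⟨_, hy⟩
      have := walkDist_add_one_le (hl'.cons hay)
      simp only [List.length_cons] at this
      omega

lemma mem_convexHullD_of_mem_interval {I : V → V → Set V} {S : Set V} (hu : u ∈ S)
    (hv : v ∈ S) (hw : w ∈ I u v) : w ∈ convexHullD I S :=
  Set.mem_sInter.mpr fun _ ⟨hC, hSC⟩ => hC u (hSC hu) v (hSC hv) hw

lemma hullNumber_le_ncard {I : V → V → Set V} {S : Set V} (hS : IsHullSet I S) :
    hullNumber I ≤ S.ncard :=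
  Nat.sInf_le ⟨S, hS, rfl⟩

def parentPath (par : V → V) : ℕ → V → List V
  | 0, v => [v]
  | k + 1, v => v :: parentPath par k (par v)

lemma mem_parentPath_self (par : V → V) (k : ℕ) (v : V) : v ∈ parentPath par k v := by
  cases k <;> simp [parentPath]

lemma length_parentPath (par : V → V) (k : ℕ) (v : V) : (parentPath par k v).length = k + 1 := by
  induction k generalizing v with
  | zero => rfl
  | succ k ih => simp [parentPath, ih]

section InTree

variable {r : V} {par : V → V}

lemma diWalk_parentPath (hr : ∀ v, Reach A v r) (harc : ∀ v ≠ r, A v (par v))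
    (hdist : ∀ v ≠ r, walkDist A (par v) r + 1 = walkDist A v r) (v : V) :
    DiWalk A v r (parentPath par (walkDist A v r) v) := by
  suffices ∀ k v, walkDist A v r = k → DiWalk A v r (parentPath par k v) from this _ v rfl
  intro k
  induction k with
  | zero =>
    intro v hv
    obtain rfl := (hr v).eq_of_walkDist_eq_zero hv
    exact DiWalk.singleton v
  | succ k ih =>
    intro v hv
    have hvr : v ≠ r := by
      rintro rfl
      simp [walkDist_self] at hv
    exact (ih (par v) (by have := hdist v hvr; omega)).cons (harc v hvr)

lemma isGeodesic_parentPath (hr : ∀ v, Reach A v r) (harc : ∀ v ≠ r, A v (par v))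
    (hdist : ∀ v ≠ r, walkDist A (par v) r + 1 = walkDist A v r) (v : V) :
    IsGeodesic A v r (parentPath par (walkDist A v r) v) :=
  .of_length (diWalk_parentPath hr harc hdist v) (length_parentPath ..)

/-- Among the vertices whose parent path passes through `v`, one farthest from `r` is a leaf. -/
lemma exists_leaf_mem_parentPath [Finite V]
    (hdist : ∀ v ≠ r, walkDist A (par v) r + 1 = walkDist A v r) (v : V) :
    ∃ w ∉ par '' {r}ᶜ, v ∈ parentPath par (walkDist A w r) w := by
  obtain ⟨w, hwv, hmax⟩ := Set.exists_max_image {w | v ∈ parentPath par (walkDist A w r) w}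
    (walkDist A · r) (Set.toFinite _) ⟨v, mem_parentPath_self ..⟩
  refine ⟨w, ?_, hwv⟩
  rintro ⟨x, hxr, rfl⟩
  have hx := hdist x hxr
  have : v ∈ parentPath par (walkDist A x r) x := by
    rw [← hx, parentPath]
    exact List.mem_cons_of_mem _ hwv
  have := hmax x this
  omega

lemma isHullSet_insert_leaves [Finite V] (hr : ∀ v, Reach A v r)
    (harc : ∀ v ≠ r, A v (par v)) (hdist : ∀ v ≠ r, walkDist A (par v) r + 1 = walkDist A v r) :
    IsHullSet (geoInterval A) (insert r (par '' {r}ᶜ)ᶜ) := by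
  refine Set.eq_univ_of_forall fun v => ?_
  obtain ⟨w, hw, hv⟩ := exists_leaf_mem_parentPath hdist v
  exact mem_convexHullD_of_mem_interval (Set.mem_insert_of_mem r hw) (Set.mem_insert r _)
    (Or.inr (Or.inl ⟨_, isGeodesic_parentPath hr harc hdist w, hv⟩))

end InTree

lemma card_sub_one_add_ncard_leaves_le_arcCount [Finite V] {r : V} {par : V → V}
    (harc : ∀ v ≠ r, A v (par v)) (hin : ∀ w ≠ r, ∃ a, A a w) :
    Nat.card V - 1 + ((par '' {r}ᶜ)ᶜ \ {r}).ncard ≤ arcCount A := by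
  choose! src hsrc using hin
  set treeArcs : Set (V × V) := (fun v => (v, par v)) '' {r}ᶜ
  set leafArcs : Set (V × V) := (fun w => (src w, w)) '' ((par '' {r}ᶜ)ᶜ \ {r})
  have hdisj : Disjoint treeArcs leafArcs := by
    rw [Set.disjoint_left]
    rintro _ ⟨v, hv, rfl⟩ ⟨w, ⟨hw, -⟩, hvw⟩
    exact hw ⟨v, hv, (congrArg Prod.snd hvw).symm⟩
  have hsub : treeArcs ∪ leafArcs ⊆ {p | A p.1 p.2} := by
    rintro _ (⟨v, hv, rfl⟩ | ⟨w, ⟨-, hw⟩, rfl⟩)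
    exacts [harc v hv, hsrc w hw]
  calc Nat.card V - 1 + ((par '' {r}ᶜ)ᶜ \ {r}).ncard
      = treeArcs.ncard + leafArcs.ncard := by
        rw [Set.ncard_image_of_injective _ fun _ _ h => congrArg Prod.fst h,
          Set.ncard_image_of_injective _ fun _ _ h => congrArg Prod.snd h,
          Set.ncard_compl, Set.ncard_singleton]
    _ = (treeArcs ∪ leafArcs).ncard := (Set.ncard_union_eq hdisj).symm
    _ ≤ {p : V × V | A p.1 p.2}.ncard := Set.ncard_le_ncard hsub
    _ = arcCount A := Nat.card_coe_set_eq _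

end

theorem stmt_5_general {V : Type*} [Finite V] (A : V → V → Prop)
    (hsc : StronglyConnected A) (h2 : 2 ≤ Nat.card V) :
    (hullNumber (geoInterval A) : ℤ) ≤
      (arcCount A : ℤ) - (Nat.card V : ℤ) + 2 := by
  obtain ⟨r⟩ : Nonempty V := (Nat.card_pos_iff.mp (by omega)).1
  choose! par harc hdist using fun v (hv : v ≠ r) => (hsc v r).exists_arc_walkDist hv
  have harcs := card_sub_one_add_ncard_leaves_le_arcCount harc
    fun w hw => exists_arc_to_of_reach (hsc r w) (Ne.symm hw)
  set leaves := (par '' {r}ᶜ)ᶜ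
  have hhull : hullNumber (geoInterval A) ≤ (insert r leaves).ncard :=
    hullNumber_le_ncard (isHullSet_insert_leaves (hsc · r) harc hdist)
  have hroot : (insert r leaves).ncard ≤ (leaves \ {r}).ncard + 1 := by
    rw [← Set.insert_sdiff_singleton]
    exact Set.ncard_insert_le _ _
  omega

/-- For a strongly connected oriented graph with at least two
vertices, `hn_g(D) ≤ m(D) - n(D) + 2`. -/
theorem stmt_5 {V : Type*} [Finite V] (A : V → V → Prop) (hA : IsOriented A)
    (hsc : StronglyConnected A) (h2 : 2 ≤ Nat.card V) :
    (hullNumber (geoInterval A) : ℤ) ≤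
      (arcCount A : ℤ) - (Nat.card V : ℤ) + 2 :=
  stmt_5_general A hsc h2
end

section
/- If T is a strongly connected tournament with at least two vertices, then the hull number of T equals 2 both in the P3* convexity and in the geodetic convexity: hn_{P3*}(T) = hn_g(T) = 2. -/
/-!
Induction on the number `n` of vertices of a strong tournament shows that some pair of vertices
has the whole tournament as P3*-hull. For `n = 3` take two vertices of the triangle. For `n ≥ 4`,
Moon's argument (grow strong subtournaments from a triangle one vertex at a time) gives a vertex
`v` whose deletion leaves a strong tournament; the pair found there generates everything but `v`,
and `v` lies on a triangle `v → a → b → v`, hence on the shortest path `b → v → a`. In an oriented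
graph every P3*-interval lies in the geodetic one, so the same pair is a geodetic hull set, and
singletons are convex in both convexities.
-/

open Set Relation

section ConvexHull

variable {V : Type*} {I J : V → V → Set V} {S C : Set V}

lemma subset_convexHullD : S ⊆ convexHullD I S := fun _ hx _ hC => hC.2 hx

lemma convexHullD_subset (hC : IsConvexSet I C) (hSC : S ⊆ C) : convexHullD I S ⊆ C :=
  sInter_subset_of_mem ⟨hC, hSC⟩

lemma isConvexSet_convexHullD : IsConvexSet I (convexHullD I S) :=
  fun _ hu _ hv _ hw C hC => hC.1 _ (hu C hC) _ (hv C hC) hw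

lemma convexHullD_mono_interval (hIJ : ∀ u v, I u v ⊆ J u v) :
    convexHullD I S ⊆ convexHullD J S :=
  fun _ hx C hC => hx C ⟨fun u hu v hv => (hIJ u v).trans (hC.1 u hu v hv), hC.2⟩

lemma IsHullSet.mono_interval (hS : IsHullSet I S) (hIJ : ∀ u v, I u v ⊆ J u v) :
    IsHullSet J S :=
  eq_univ_of_univ_subset (hS ▸ convexHullD_mono_interval hIJ)

lemma Set.Subsingleton.isConvexSet (hI : ∀ u, I u u ⊆ {u}) (hS : S.Subsingleton) :
    IsConvexSet I S := by
  intro u hu v hv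
  obtain rfl := hS hu hv
  exact (hI u).trans (singleton_subset_iff.2 hu)

lemma IsHullSet.two_le_ncard [Finite V] [Nontrivial V] (hI : ∀ u, I u u ⊆ {u})
    (hS : IsHullSet I S) : 2 ≤ S.ncard := by
  by_contra! h
  have hsub : S.Subsingleton := ncard_le_one_iff_subsingleton.1 (by omega)
  have huniv : univ ⊆ S := hS ▸ convexHullD_subset (hsub.isConvexSet hI) subset_rfl
  exact nontrivial_univ.not_subsingleton (hsub.anti huniv)

lemma hullNumber_eq_two [Finite V] [Nontrivial V] (hI : ∀ u, I u u ⊆ {u})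
    (hS : IsHullSet I S) (hcard : S.ncard = 2) : hullNumber I = 2 :=
  le_antisymm (Nat.sInf_le ⟨S, hS, hcard⟩)
    (le_csInf ⟨2, S, hS, hcard⟩ fun _ ⟨_, hS', hcard'⟩ => hcard' ▸ hS'.two_le_ncard hI)

end ConvexHull

section Intervals

variable {V : Type*} {A : V → V → Prop} {u v w : V}

lemma IsTournament.isOriented (hT : IsTournament A) : IsOriented A := hT.1

lemma IsTournament.arc_of_not_arc (hT : IsTournament A) (hne : u ≠ v) (h : ¬ A u v) : A v u :=
  (hT.2 u v hne).resolve_left h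

lemma IsOriented.ne (hA : IsOriented A) (h : A u v) : u ≠ v := by
  rintro rfl
  exact hA u u h h

lemma p3sInterval_self_subset (hA : IsOriented A) (u : V) : p3sInterval A u u ⊆ {u} := by
  rintro w (hw | ⟨huw, hwu, -⟩ | ⟨huw, hwu, -⟩)
  · simpa using hw
  all_goals exact absurd hwu (hA u w huw)

lemma isGeodesic_self {l : List V} (h : IsGeodesic A u u l) : l = [u] := by
  obtain ⟨⟨hhead, -, -⟩, hmin⟩ := h
  have hlen : l.length ≤ 1 := hmin [u] ⟨rfl, rfl, List.isChain_singleton u⟩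
  rcases l with _ | ⟨x, _ | ⟨y, r⟩⟩ <;> simp_all

lemma geoInterval_self_subset (u : V) : geoInterval A u u ⊆ {u} := by
  rintro w (hw | ⟨l, hl, hwl⟩ | ⟨l, hl, hwl⟩)
  · simpa using hw
  all_goals simpa [isGeodesic_self hl] using hwl

lemma isGeodesic_of_p3s (hA : IsOriented A) (huw : A u w) (hwv : A w v) (huv : ¬ A u v) :
    IsGeodesic A u v [u, w, v] := by
  have hne : u ≠ v := by rintro rfl; exact hA u w huw hwv
  refine ⟨⟨rfl, rfl, .cons_cons huw (.cons_cons hwv (.singleton _))⟩,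
    fun l ⟨hhead, hlast, (hchain : l.IsChain A)⟩ => ?_⟩
  rcases l with _ | ⟨a, _ | ⟨b, _ | ⟨c, r⟩⟩⟩ <;> simp_all

lemma p3sInterval_subset_geoInterval (hA : IsOriented A) (u v : V) :
    p3sInterval A u v ⊆ geoInterval A u v := by
  rintro w (hw | ⟨huw, hwv, huv⟩ | ⟨hvw, hwu, hvu⟩)
  · exact Or.inl hw
  · exact Or.inr (Or.inl ⟨_, isGeodesic_of_p3s hA huw hwv huv, by simp⟩)
  · exact Or.inr (Or.inr ⟨_, isGeodesic_of_p3s hA hvw hwu hvu, by simp⟩)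

lemma mem_convexHullD_p3sInterval_of_triangle (hA : IsOriented A) {T : Set V}
    (hu : u ∈ convexHullD (p3sInterval A) T) (hw : w ∈ convexHullD (p3sInterval A) T)
    (hvu : A v u) (huw : A u w) (hwv : A w v) : v ∈ convexHullD (p3sInterval A) T :=
  isConvexSet_convexHullD _ hw _ hu (Or.inr (Or.inl ⟨hwv, hvu, hA u w huw⟩))

end Intervals

section StrongSets

variable {V : Type*} {A : V → V → Prop} {S X Y : Set V} {u v w a b c : V}

def inducedArcs (A : V → V → Prop) (S : Set V) : V → V → Prop :=
  fun a b => a ∈ S ∧ b ∈ S ∧ A a b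

def IsStrongSet (A : V → V → Prop) (S : Set V) : Prop :=
  ∀ u ∈ S, ∀ v ∈ S, ReflTransGen (inducedArcs A S) u v

lemma reflTransGen_inducedArcs_mono (hXY : X ⊆ Y) (h : ReflTransGen (inducedArcs A X) u v) :
    ReflTransGen (inducedArcs A Y) u v :=
  ReflTransGen.mono (fun _ _ ⟨ha, hb, hab⟩ => ⟨hXY ha, hXY hb, hab⟩) _ _ h

lemma reflTransGen_of_diWalk {l : List V} (h : DiWalk A u v l) : ReflTransGen A u v := by
  obtain ⟨hhead, hlast, hchain⟩ := h
  obtain ⟨t, rfl⟩ := List.head?_eq_some_iff.1 hhead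
  refine List.relationReflTransGen_of_exists_isChain_cons t hchain ?_
  rw [List.getLast?_eq_some_getLast (List.cons_ne_nil u t)] at hlast
  exact Option.some_inj.1 hlast

lemma StronglyConnected.isStrongSet_univ (h : StronglyConnected A) : IsStrongSet A univ :=
  fun u _ v _ => ReflTransGen.mono (fun _ _ hab => ⟨trivial, trivial, hab⟩) _ _
    (reflTransGen_of_diWalk (h u v).choose_spec)

lemma isStrongSet_of_hub (hto : ∀ x ∈ S, ReflTransGen (inducedArcs A S) x c)
    (hfrom : ∀ x ∈ S, ReflTransGen (inducedArcs A S) c x) : IsStrongSet A S :=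
  fun u hu v hv => (hto u hu).trans (hfrom v hv)

lemma IsStrongSet.exists_arc_out (hS : IsStrongSet A S) (hXS : X ⊆ S) (hu : u ∈ X)
    (hv : v ∈ S \ X) : ∃ a ∈ X, ∃ b ∈ S \ X, A a b := by
  by_contra! h
  have hpath := hS u (hXS hu) v hv.1
  refine hv.2 ?_
  clear hv
  induction hpath with
  | refl => exact hu
  | tail _ hbc ih =>
    obtain ⟨-, hc, hbc⟩ := hbc
    by_contra hcX
    exact h _ ih _ ⟨hc, hcX⟩ hbc

lemma IsStrongSet.exists_triangle (hT : IsTournament A) (hS : IsStrongSet A S) (hv : v ∈ S)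
    (hw : w ∈ S) (hwv : w ≠ v) : ∃ a ∈ S, ∃ b ∈ S, A v a ∧ A a b ∧ A b v := by
  obtain ⟨c, ⟨hcS, hcv⟩, d, ⟨hdS, hd⟩, hcd⟩ :=
    hS.exists_arc_out sdiff_subset ⟨hw, hwv⟩ (show v ∈ S \ (S \ {v}) by simp [hv])
  obtain rfl : d = v := by simpa [hdS] using hd
  -- An arc leaving `d` and its out-neighbours ends at an in-neighbour of `d`, closing a triangle.
  set N := {x ∈ S | x = d ∨ A d x}
  obtain ⟨a, ⟨haS, had⟩, b, ⟨hbS, hbN⟩, hab⟩ :=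
    hS.exists_arc_out (sep_subset _ _) (show d ∈ N from ⟨hv, .inl rfl⟩)
      (show c ∈ S \ N from ⟨hcS, fun h => h.2.elim hcv (hT.isOriented c d hcd)⟩)
  simp only [mem_sep_iff, not_and, not_or] at hbN
  obtain ⟨hbd, hdb⟩ := hbN hbS
  rcases had with rfl | hda
  · exact absurd hab hdb
  · exact ⟨a, haS, b, hbS, hda, hab, hT.arc_of_not_arc (Ne.symm hbd) hdb⟩

lemma ncard_triangle (hA : IsOriented A) (hva : A v a) (hab : A a b) (hbv : A b v) :
    ({v, a, b} : Set V).ncard = 3 :=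
  ncard_eq_three.2 ⟨v, a, b, hA.ne hva, (hA.ne hbv).symm, hA.ne hab, rfl⟩

lemma isStrongSet_triangle (hva : A v a) (hab : A a b) (hbv : A b v) :
    IsStrongSet A {v, a, b} := by
  have arc {x y} (hx : x ∈ ({v, a, b} : Set V)) (hy : y ∈ ({v, a, b} : Set V)) (hxy : A x y) :
      ReflTransGen (inducedArcs A {v, a, b}) x y :=
    .single ⟨hx, hy, hxy⟩
  have hv : v ∈ ({v, a, b} : Set V) := by simp
  have ha : a ∈ ({v, a, b} : Set V) := by simp
  have hb : b ∈ ({v, a, b} : Set V) := by simp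
  refine isStrongSet_of_hub (c := v) ?_ ?_ <;> rintro x (rfl | rfl | rfl)
  · exact .refl
  · exact (arc ha hb hab).trans (arc hb hv hbv)
  · exact arc hb hv hbv
  · exact .refl
  · exact arc hv ha hva
  · exact (arc hv ha hva).trans (arc ha hb hab)

lemma IsStrongSet.exists_triangle_subset [Finite V] (hT : IsTournament A)
    (hS : IsStrongSet A S) (h2 : 2 ≤ S.ncard) :
    ∃ v a b, {v, a, b} ⊆ S ∧ A v a ∧ A a b ∧ A b v := by
  obtain ⟨v, w, hv, hw, hvw⟩ := (one_lt_ncard_iff).1 h2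
  obtain ⟨a, ha, b, hb, hva, hab, hbv⟩ := hS.exists_triangle hT hv hw hvw.symm
  exact ⟨v, a, b, by simp [insert_subset_iff, hv, ha, hb], hva, hab, hbv⟩

lemma IsStrongSet.three_le_ncard [Finite V] (hT : IsTournament A) (hS : IsStrongSet A S)
    (h2 : 2 ≤ S.ncard) : 3 ≤ S.ncard := by
  obtain ⟨v, a, b, hsub, hva, hab, hbv⟩ := hS.exists_triangle_subset hT h2
  exact ncard_triangle hT.isOriented hva hab hbv ▸ ncard_le_ncard hsub

lemma IsStrongSet.insert_of_arcs (hX : IsStrongSet A X) (ha : a ∈ X) (hb : b ∈ X)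
    (haw : A a w) (hwb : A w b) : IsStrongSet A (insert w X) := by
  have lift {x y} (hx : x ∈ X) (hy : y ∈ X) : ReflTransGen (inducedArcs A (insert w X)) x y :=
    reflTransGen_inducedArcs_mono (subset_insert w X) (hX x hx y hy)
  refine isStrongSet_of_hub (c := a) ?_ ?_ <;> rintro x (rfl | hx)
  · exact .head ⟨mem_insert _ _, mem_insert_of_mem _ hb, hwb⟩ (lift hb ha)
  · exact lift hx ha
  · exact .single ⟨mem_insert_of_mem _ ha, mem_insert _ _, haw⟩
  · exact lift ha hx

lemma isStrongSet_insert_insert {p q : V} (hY : Y.Nonempty) (hqp : A q p)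
    (hp : ∀ x ∈ Y, A p x) (hq : ∀ x ∈ Y, A x q) : IsStrongSet A (insert p (insert q Y)) := by
  set Z := insert p (insert q Y)
  have hpZ : p ∈ Z := mem_insert _ _
  have hqZ : q ∈ Z := mem_insert_of_mem _ (mem_insert _ _)
  have hYZ {x} (hx : x ∈ Y) : x ∈ Z := mem_insert_of_mem _ (mem_insert_of_mem _ hx)
  have hqp' : ReflTransGen (inducedArcs A Z) q p := .single ⟨hqZ, hpZ, hqp⟩
  obtain ⟨y, hy⟩ := hY
  refine isStrongSet_of_hub (c := p) ?_ ?_ <;> rintro x (rfl | rfl | hx)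
  · exact .refl
  · exact hqp'
  · exact .head ⟨hYZ hx, hqZ, hq x hx⟩ hqp'
  · exact .refl
  · exact .head ⟨hpZ, hYZ hy, hp y hy⟩ (.single ⟨hYZ hy, hqZ, hq y hy⟩)
  · exact .single ⟨hpZ, hYZ hx, hp x hx⟩

lemma IsStrongSet.exists_arc_dominated_to_dominating (hA : IsOriented A) (hS : IsStrongSet A S)
    (hXS : X ⊆ S) (hu : u ∈ X) (hw : w ∈ S \ X)
    (hsplit : ∀ w ∈ S \ X, (∀ x ∈ X, A w x) ∨ (∀ x ∈ X, A x w)) :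
    ∃ q ∈ S \ X, ∃ p ∈ S \ X, (∀ x ∈ X, A x q) ∧ (∀ x ∈ X, A p x) ∧ A q p := by
  have hSX : S \ (S \ X) = X := sdiff_sdiff_cancel_left hXS
  obtain ⟨d, hd, y, hy, hdy⟩ := hS.exists_arc_out sdiff_subset hw (hSX.symm ▸ hu)
  rw [hSX] at hy
  have hdP : ∀ x ∈ X, A d x := (hsplit d hd).resolve_right fun h => hA y d (h y hy) hdy
  set P := {w ∈ S \ X | ∀ x ∈ X, A w x}
  have hSP : S \ (S \ P) = P := sdiff_sdiff_cancel_left fun w hw => hw.1.1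
  obtain ⟨q, hq, p, hp, hqp⟩ := hS.exists_arc_out sdiff_subset
    (show u ∈ S \ P from ⟨hXS hu, fun h => h.1.2 hu⟩)
    (show d ∈ S \ (S \ P) by rw [hSP]; exact ⟨hd, hdP⟩)
  rw [hSP] at hp
  have hqX : q ∈ S \ X := ⟨hq.1, fun h => hA q p hqp (hp.2 q h)⟩
  exact ⟨q, hqX, p, hp.1, (hsplit q hqX).resolve_left fun h => hq.2 ⟨hqX, h⟩, hp.2, hqp⟩

lemma IsStrongSet.exists_ncard_succ [Finite V] (hT : IsTournament A) (hS : IsStrongSet A S)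
    (hXS : X ⊆ S) (hX : IsStrongSet A X) (h2 : 2 ≤ X.ncard) (hne : (S \ X).Nonempty) :
    ∃ Y ⊆ S, IsStrongSet A Y ∧ Y.ncard = X.ncard + 1 := by
  by_cases hthrough : ∃ w ∈ S \ X, ∃ a ∈ X, ∃ b ∈ X, A a w ∧ A w b
  · obtain ⟨w, hw, a, ha, b, hb, haw, hwb⟩ := hthrough
    exact ⟨insert w X, insert_subset hw.1 hXS, hX.insert_of_arcs ha hb haw hwb,
      ncard_insert_of_notMem hw.2⟩
  push Not at hthrough
  have hsplit : ∀ w ∈ S \ X, (∀ x ∈ X, A w x) ∨ (∀ x ∈ X, A x w) := by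
    intro w hw
    by_cases hin : ∃ a ∈ X, A a w
    · obtain ⟨a, ha, haw⟩ := hin
      exact .inr fun x hx =>
        hT.arc_of_not_arc (fun h => hw.2 (h ▸ hx)) (hthrough w hw a ha x hx haw)
    · push Not at hin
      exact .inl fun x hx => hT.arc_of_not_arc (fun h => hw.2 (h ▸ hx)) (hin x hx)
  -- Every vertex outside `X` now dominates `X` or is dominated by it, so the strong set is
  -- grown by trading a vertex `z` of `X` for an arc `q → p` from the second kind to the first.
  obtain ⟨u, z, hu, hz, huz⟩ := (one_lt_ncard_iff).1 h2
  obtain ⟨w, hw⟩ := hne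
  obtain ⟨q, hq, p, hp, hqX, hpX, hqp⟩ :=
    hS.exists_arc_dominated_to_dominating hT.isOriented hXS hu hw hsplit
  refine ⟨insert p (insert q (X \ {z})),
    insert_subset hp.1 (insert_subset hq.1 (sdiff_subset.trans hXS)),
    isStrongSet_insert_insert ⟨u, hu, huz⟩ hqp (fun x hx => hpX x hx.1)
      (fun x hx => hqX x hx.1), ?_⟩
  have hq' : q ∉ X \ {z} := fun h => hq.2 h.1
  have hp' : p ∉ insert q (X \ {z}) := by
    rintro (h | h)
    exacts [hT.isOriented.ne hqp h.symm, hp.2 h.1]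
  rw [ncard_insert_of_notMem hp', ncard_insert_of_notMem hq', ncard_sdiff_singleton_of_mem hz]
  omega

lemma IsStrongSet.exists_subset_ncard [Finite V] (hT : IsTournament A) (hS : IsStrongSet A S)
    {m : ℕ} (h3 : 3 ≤ m) (hm : m ≤ S.ncard) : ∃ X ⊆ S, IsStrongSet A X ∧ X.ncard = m := by
  induction m, h3 using Nat.le_induction with
  | base =>
    obtain ⟨v, a, b, hsub, hva, hab, hbv⟩ := hS.exists_triangle_subset hT (by omega)
    exact ⟨_, hsub, isStrongSet_triangle hva hab hbv, ncard_triangle hT.isOriented hva hab hbv⟩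
  | succ m h3 ih =>
    obtain ⟨X, hXS, hX, rfl⟩ := ih (by omega)
    exact hS.exists_ncard_succ hT hXS hX (by omega) (sdiff_nonempty_of_ncard_lt_ncard (by omega))

lemma IsStrongSet.exists_isStrongSet_sdiff_singleton [Finite V] (hT : IsTournament A)
    (hS : IsStrongSet A S) (h4 : 4 ≤ S.ncard) : ∃ v ∈ S, IsStrongSet A (S \ {v}) := by
  obtain ⟨X, hXS, hX, hXcard⟩ := hS.exists_subset_ncard hT (m := S.ncard - 1) (by omega) (by omega)
  obtain ⟨v, hv⟩ := ncard_eq_one.1 (show (S \ X).ncard = 1 by rw [ncard_sdiff hXS]; omega)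
  refine ⟨v, (hv ▸ mem_singleton v : v ∈ S \ X).1, ?_⟩
  rwa [← hv, sdiff_sdiff_cancel_left hXS]

theorem IsStrongSet.exists_pair_subset_convexHullD [Finite V] (hT : IsTournament A)
    (hS : IsStrongSet A S) (h3 : 3 ≤ S.ncard) :
    ∃ u v : V, u ≠ v ∧ S ⊆ convexHullD (p3sInterval A) {u, v} := by
  induction hn : S.ncard using Nat.strong_induction_on generalizing S with
  | _ n ih =>
    rw [hn] at h3
    rcases h3.eq_or_lt with h3 | h4
    · obtain ⟨v, a, b, hsub, hva, hab, hbv⟩ := hS.exists_triangle_subset hT (by omega)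
      have hSeq : {v, a, b} = S :=
        eq_of_subset_of_ncard_le hsub (by rw [ncard_triangle hT.isOriented hva hab hbv]; omega)
      have ha : a ∈ convexHullD (p3sInterval A) {a, b} := subset_convexHullD (mem_insert _ _)
      have hb : b ∈ convexHullD (p3sInterval A) {a, b} :=
        subset_convexHullD (mem_insert_of_mem _ rfl)
      refine ⟨a, b, hT.isOriented.ne hab, hSeq ▸ ?_⟩
      rintro x (rfl | rfl | rfl)
      exacts [mem_convexHullD_p3sInterval_of_triangle hT.isOriented ha hb hva hab hbv, ha, hb]
    · obtain ⟨v, hv, hR⟩ := hS.exists_isStrongSet_sdiff_singleton hT (by omega)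
      have hRcard : (S \ {v}).ncard = n - 1 := by rw [ncard_sdiff_singleton_of_mem hv, hn]
      obtain ⟨u₀, v₀, hne, hRhull⟩ := ih (n - 1) (by omega) hR (by omega) hRcard
      obtain ⟨w, hw⟩ := nonempty_of_ncard_ne_zero (s := S \ {v}) (by omega)
      obtain ⟨a, ha, b, hb, hva, hab, hbv⟩ := hS.exists_triangle hT hv hw.1 hw.2
      have hmem {x} (hx : x ∈ S) (hxv : x ≠ v) := hRhull ⟨hx, hxv⟩
      refine ⟨u₀, v₀, hne, fun x hx => ?_⟩
      obtain rfl | hxv := eq_or_ne x v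
      · exact mem_convexHullD_p3sInterval_of_triangle hT.isOriented
          (hmem ha (hT.isOriented.ne hva).symm) (hmem hb (hT.isOriented.ne hbv)) hva hab hbv
      · exact hmem hx hxv

end StrongSets

/-- A strongly connected tournament on at least two vertices has
hull number 2 in both the P3* and the geodetic convexities. -/
theorem stmt_8 {V : Type*} [Finite V] (A : V → V → Prop)
    (hT : IsTournament A) (hsc : StronglyConnected A) (h2 : 2 ≤ Nat.card V) :
    hullNumber (p3sInterval A) = 2 ∧ hullNumber (geoInterval A) = 2 := by
  have : Nontrivial V := Finite.one_lt_card_iff_nontrivial.mp h2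
  have hS := hsc.isStrongSet_univ
  obtain ⟨u, v, huv, hhull⟩ :=
    hS.exists_pair_subset_convexHullD hT (hS.three_le_ncard hT (by rwa [ncard_univ]))
  have hp3s : IsHullSet (p3sInterval A) {u, v} := eq_univ_of_univ_subset hhull
  exact ⟨hullNumber_eq_two (p3sInterval_self_subset hT.isOriented) hp3s (ncard_pair huv),
    hullNumber_eq_two geoInterval_self_subset
      (hp3s.mono_interval (p3sInterval_subset_geoInterval hT.isOriented)) (ncard_pair huv)⟩
end
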